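/- arXiv:2005.01904 — 2 statements merged into one kernel-verified Lean document; each statement's English description precedes it below -/
import Mathlib

section
/- Let V(t,x,y) = μ(x−y)² exp(∫_t^T 2r(h)dh) − y exp(∫_t^T r(h)dh) − (1/(4μ))∫_t^T β(h)dh. Then V(T,x,y) = μ(x−y)² − y for all x,y ∈ ℝ, and for every t ∈ [0,T] and x,y ∈ ℝ the section t' ↦ V(t',x,y) is differentiable at t, the section x' ↦ V(t,x',y) is twice differentiable at x, the section y' ↦ V(t,x,y') is differentiable at y, and the Hamilton–Jacobi–Bellman equation holds: ∂_t V(t,x,y) = − inf_{π ∈ ℝⁿ} [ ∂_x V(t,x,y)·(r(t)x + γ(t)⋅π) + ∂_y V(t,x,y)·(r(t)y + γ(t)⋅π) + (1/2)·∂²_{xx}V(t,x,y)·(π ⋅ (σ(t)σ(t)ᵀ)π) ]. -/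
/-!
For `V`, with `A = exp ∫ₜᵀ 2r = B²` and `B = exp ∫ₜᵀ r`, one has `∂ₓV = 2μ(x - y)A`,
`∂ᵧV = -∂ₓV - B` and `∂²ₓₓV = 2μA`. Since `∂ₓV + ∂ᵧV = -B`, the Hamiltonian is
`r(x ∂ₓV + y ∂ᵧV) - B (γ ⬝ π) + μA (π ⬝ Σ π)` with `Σ = σσᵀ` positive definite, and completing
the square gives its infimum `r(x ∂ₓV + y ∂ᵧV) - B²β/(4μA) = r(x ∂ₓV + y ∂ᵧV) - β/(4μ)`.
By the fundamental theorem of calculus this is exactly `-∂ₜV`.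
-/

open Matrix Set

section CompletingTheSquare

variable {ι : Type*} [Fintype ι] [DecidableEq ι] {M : Matrix ι ι ℝ}

theorem Matrix.IsSymm.add_mul_dotProduct_add_mul_dotProduct_mulVec_eq (hM : M.IsSymm)
    (hdet : IsUnit M.det) (g : ι → ℝ) {a : ℝ} (ha : a ≠ 0) (b c : ℝ) (π : ι → ℝ) :
    c + b * (g ⬝ᵥ π) + a * (π ⬝ᵥ M *ᵥ π) =
      a * ((π + (b / (2 * a)) • M⁻¹ *ᵥ g) ⬝ᵥ M *ᵥ (π + (b / (2 * a)) • M⁻¹ *ᵥ g))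
        + (c - b ^ 2 / (4 * a) * (g ⬝ᵥ M⁻¹ *ᵥ g)) := by
  have hMw : M *ᵥ (M⁻¹ *ᵥ g) = g := by
    rw [mulVec_mulVec, mul_nonsing_inv _ hdet, one_mulVec]
  have hsym : ∀ u v : ι → ℝ, u ⬝ᵥ M *ᵥ v = v ⬝ᵥ M *ᵥ u := fun u v => by
    rw [dotProduct_mulVec, ← mulVec_transpose, hM.eq, dotProduct_comm]
  rw [mulVec_add, mulVec_smul, hMw, dotProduct_add, add_dotProduct, add_dotProduct,
    hsym (_ • _) π, mulVec_smul, hMw]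
  simp only [smul_dotProduct, dotProduct_smul, smul_eq_mul]
  rw [dotProduct_comm π g, dotProduct_comm _ g]
  field_simp
  ring

theorem Matrix.PosDef.iInf_add_mul_dotProduct_add_mul_dotProduct_mulVec (hM : M.PosDef)
    (g : ι → ℝ) {a : ℝ} (ha : 0 < a) (b c : ℝ) :
    ⨅ π : ι → ℝ, (c + b * (g ⬝ᵥ π) + a * (π ⬝ᵥ M *ᵥ π))
      = c - b ^ 2 / (4 * a) * (g ⬝ᵥ M⁻¹ *ᵥ g) := by
  have hsq := (isHermitian_iff_isSymm.mp hM.isHermitian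
    ).add_mul_dotProduct_add_mul_dotProduct_mulVec_eq hM.det_pos.ne'.isUnit g ha.ne' b c
  have hnonneg : ∀ v : ι → ℝ, 0 ≤ v ⬝ᵥ M *ᵥ v := fun v => by
    simpa using hM.posSemidef.dotProduct_mulVec_nonneg v
  refine IsGLB.ciInf_eq (IsLeast.isGLB ⟨⟨-(b / (2 * a)) • M⁻¹ *ᵥ g, ?_⟩, ?_⟩)
  · dsimp only
    rw [hsq, neg_smul, neg_add_cancel]
    simp
  · rintro _ ⟨π, rfl⟩
    dsimp only
    rw [hsq π]
    nlinarith [hnonneg (π + (b / (2 * a)) • M⁻¹ *ᵥ g)]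

end CompletingTheSquare

theorem ContinuousOn.matrix_inv {ι X 𝕜 : Type*} [Fintype ι] [DecidableEq ι] [TopologicalSpace X]
    [NormedField 𝕜] {A : X → Matrix ι ι 𝕜} {s : Set X} (hA : ContinuousOn A s)
    (hdet : ∀ x ∈ s, (A x).det ≠ 0) : ContinuousOn (fun x => (A x)⁻¹) s := fun x hx =>
  (continuousAt_matrix_inv _ (by rw [Ring.inverse_eq_inv']; exact continuousAt_inv₀ (hdet x hx))
    ).comp_continuousWithinAt (hA x hx)

theorem hasDerivWithinAt_integral_Icc_left {E : Type*} [NormedAddCommGroup E] [NormedSpace ℝ E]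
    [CompleteSpace E] {f : ℝ → E} {a b t : ℝ} (hf : ContinuousOn f (Icc a b))
    (ht : t ∈ Icc a b) :
    HasDerivWithinAt (fun u => ∫ h in u..b, f h) (-f t) (Icc a b) t := by
  have : Fact (t ∈ Icc a b) := ⟨ht⟩
  have hsub : uIcc t b ⊆ Icc a b := by
    rw [uIcc_of_le ht.2]
    exact Icc_subset_Icc ht.1 le_rfl
  exact intervalIntegral.integral_hasDerivWithinAt_left (hf.mono hsub).intervalIntegrable
    (hf.stronglyMeasurableAtFilter_nhdsWithin measurableSet_Icc t) (hf t ht)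

theorem Real.exp_integral_two_mul (f : ℝ → ℝ) (a b : ℝ) :
    Real.exp (∫ h in a..b, 2 * f h) = Real.exp (∫ h in a..b, f h) ^ 2 := by
  rw [intervalIntegral.integral_const_mul, ← Real.exp_nat_mul]
  norm_num

theorem hasDerivAt_mul_sub_sq_left (c y u : ℝ) :
    HasDerivAt (fun x => c * (x - y) ^ 2) (2 * c * (u - y)) u := by
  simpa [mul_comm, mul_left_comm, mul_assoc] using
    (((hasDerivAt_id u).sub_const y).pow 2).const_mul c

theorem hasDerivAt_mul_sub_sq_right (c x u : ℝ) :
    HasDerivAt (fun y => c * (x - y) ^ 2) (-(2 * c * (x - u))) u := by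
  simpa [mul_comm, mul_left_comm, mul_assoc] using
    (((hasDerivAt_id u).const_sub x).pow 2).const_mul c

theorem hjb_explicit_solution_general
    (T : ℝ) (hT : 0 < T) (n d : ℕ)
    (r : ℝ → ℝ) (γ : ℝ → Fin n → ℝ) (σ : ℝ → Matrix (Fin n) (Fin d) ℝ)
    (hr : ContinuousOn r (Set.Icc 0 T)) (hγ : ContinuousOn γ (Set.Icc 0 T))
    (hσ : ContinuousOn σ (Set.Icc 0 T))
    (hpd : ∀ t ∈ Set.Icc (0:ℝ) T, (σ t * (σ t)ᵀ).PosDef)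
    (μ : ℝ) (hμ : 0 < μ)
    (β : ℝ → ℝ) (hβ : ∀ t, β t = γ t ⬝ᵥ (σ t * (σ t)ᵀ)⁻¹ *ᵥ γ t)
    (V : ℝ → ℝ → ℝ → ℝ)
    (hV : ∀ t x y, V t x y
        = μ * (x - y)^2 * Real.exp (∫ h in t..T, 2 * r h)
          - y * Real.exp (∫ h in t..T, r h)
          - (1/(4*μ)) * ∫ h in t..T, β h) :
    (∀ x y : ℝ, V T x y = μ * (x - y)^2 - y) ∧
    ∀ t ∈ Set.Icc (0:ℝ) T, ∀ x y : ℝ,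
      DifferentiableWithinAt ℝ (fun t' => V t' x y) (Set.Icc 0 T) t ∧
      DifferentiableAt ℝ (fun x' => V t x' y) x ∧
      DifferentiableAt ℝ (deriv (fun x' => V t x' y)) x ∧
      DifferentiableAt ℝ (fun y' => V t x y') y ∧
      derivWithin (fun t' => V t' x y) (Set.Icc 0 T) t =
        - ⨅ π : Fin n → ℝ,
          (deriv (fun x' => V t x' y) x * (r t * x + γ t ⬝ᵥ π)
            + deriv (fun y' => V t x y') y * (r t * y + γ t ⬝ᵥ π)
            + (1/2) * deriv (deriv (fun x' => V t x' y)) x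
                * (π ⬝ᵥ (σ t * (σ t)ᵀ) *ᵥ π)) := by
  refine ⟨fun x y => by simp [hV], fun t ht x y => ?_⟩
  set A := Real.exp (∫ h in t..T, 2 * r h)
  set B := Real.exp (∫ h in t..T, r h)
  have hβc : ContinuousOn β (Icc 0 T) := by
    have hinv := (show ContinuousOn (fun u => σ u * (σ u)ᵀ) (Icc 0 T) by fun_prop).matrix_inv
      fun u hu => (hpd u hu).det_pos.ne'
    simpa only [← hβ] using
      (show ContinuousOn (fun u => γ u ⬝ᵥ (σ u * (σ u)ᵀ)⁻¹ *ᵥ γ u) (Icc 0 T) by fun_prop)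
  have hVx (u : ℝ) : HasDerivAt (fun x' => V t x' y) (2 * μ * (u - y) * A) u := by
    simp only [hV]
    exact (((hasDerivAt_mul_sub_sq_left μ y u).mul_const A).sub_const _).sub_const _
  have hVxx : HasDerivAt (deriv fun x' => V t x' y) (2 * μ * A) x := by
    rw [funext fun u => (hVx u).deriv]
    simpa using (((hasDerivAt_id x).sub_const y).const_mul (2 * μ)).mul_const A
  have hVy : HasDerivAt (fun y' => V t x y') (-(2 * μ * (x - y) * A) - B) y := by
    simp only [hV]
    exact ((((hasDerivAt_mul_sub_sq_right μ x y).mul_const A).sub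
      ((hasDerivAt_id y).mul_const B)).sub_const _).congr_deriv (by ring)
  have hVt : HasDerivWithinAt (fun t' => V t' x y)
      (μ * (x - y) ^ 2 * (A * -(2 * r t)) - y * (B * -r t) - 1 / (4 * μ) * -β t) (Icc 0 T) t := by
    simp only [hV]
    have h2r : ContinuousOn (fun h => 2 * r h) (Icc 0 T) := by fun_prop
    exact (((hasDerivWithinAt_integral_Icc_left h2r ht).exp.const_mul _).sub
      ((hasDerivWithinAt_integral_Icc_left hr ht).exp.const_mul y)).sub
      ((hasDerivWithinAt_integral_Icc_left hβc ht).const_mul _)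
  refine ⟨hVt.differentiableWithinAt, (hVx x).differentiableAt, hVxx.differentiableAt,
    hVy.differentiableAt, ?_⟩
  rw [hVt.derivWithin (uniqueDiffOn_Icc hT t ht), hVxx.deriv, (hVx x).deriv, hVy.deriv,
    iInf_congr fun π => show _ = (2 * μ * (x - y) * A * (r t * x)
      + (-(2 * μ * (x - y) * A) - B) * (r t * y)) + -B * (γ t ⬝ᵥ π)
      + μ * A * (π ⬝ᵥ (σ t * (σ t)ᵀ) *ᵥ π) by ring,
    (hpd t ht).iInf_add_mul_dotProduct_add_mul_dotProduct_mulVec _ (by positivity), ← hβ t,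
    show A = B ^ 2 from Real.exp_integral_two_mul r t T]
  have hB : B ≠ 0 := (Real.exp_pos _).ne'
  field_simp
  ring

/-- The explicit function
`V(t,x,y) = μ(x−y)² exp(∫_t^T 2r) − y exp(∫_t^T r) − (1/(4μ))∫_t^T β`
satisfies the terminal condition `V(T,x,y) = μ(x−y)² − y`, its one-variable
sections are (twice) differentiable, and it solves the HJB equation. -/
theorem hjb_explicit_solution
    (T : ℝ) (hT : 0 < T) (n d : ℕ) (hn : 1 ≤ n) (hd : 1 ≤ d)
    (r : ℝ → ℝ) (γ : ℝ → Fin n → ℝ) (σ : ℝ → Matrix (Fin n) (Fin d) ℝ)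
    (hr : ContinuousOn r (Set.Icc 0 T)) (hγ : ContinuousOn γ (Set.Icc 0 T))
    (hσ : ContinuousOn σ (Set.Icc 0 T))
    (hpd : ∀ t ∈ Set.Icc (0:ℝ) T, (σ t * (σ t)ᵀ).PosDef)
    (μ : ℝ) (hμ : 0 < μ)
    (β : ℝ → ℝ) (hβ : ∀ t, β t = γ t ⬝ᵥ (σ t * (σ t)ᵀ)⁻¹ *ᵥ γ t)
    (V : ℝ → ℝ → ℝ → ℝ)
    (hV : ∀ t x y, V t x y
        = μ * (x - y)^2 * Real.exp (∫ h in t..T, 2 * r h)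
          - y * Real.exp (∫ h in t..T, r h)
          - (1/(4*μ)) * ∫ h in t..T, β h) :
    (∀ x y : ℝ, V T x y = μ * (x - y)^2 - y) ∧
    ∀ t ∈ Set.Icc (0:ℝ) T, ∀ x y : ℝ,
      DifferentiableWithinAt ℝ (fun t' => V t' x y) (Set.Icc 0 T) t ∧
      DifferentiableAt ℝ (fun x' => V t x' y) x ∧
      DifferentiableAt ℝ (deriv (fun x' => V t x' y)) x ∧
      DifferentiableAt ℝ (fun y' => V t x y') y ∧
      derivWithin (fun t' => V t' x y) (Set.Icc 0 T) t =
        - ⨅ π : Fin n → ℝ,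
          (deriv (fun x' => V t x' y) x * (r t * x + γ t ⬝ᵥ π)
            + deriv (fun y' => V t x y') y * (r t * y + γ t ⬝ᵥ π)
            + (1/2) * deriv (deriv (fun x' => V t x' y)) x
                * (π ⬝ᵥ (σ t * (σ t)ᵀ) *ᵥ π)) :=
  hjb_explicit_solution_general T hT n d r γ σ hr hγ hσ hpd μ hμ β hβ V hV
end

section
/- Let r, b, σ, α, μ, S, T be real numbers with b > r > 0, σ > 0, μ > 0, S > 1, and let s < T. Define the game-theoretic strategy π*₂(s) = (b−r)/(2μσ²S^{2α}) − (1/(2μ))·((b−r)/(σS^{α}))²·((e^{−2αr(T−s)} − 1)/r)·e^{−r(T−s)} and the dynamic optimal strategy π*(s) = (b−r)/(2μσ²S^{2α}). Then: (i) if α = 0 then π*₂(s) = π*(s); (ii) if α > 0 then π*₂(s) > π*(s); (iii) if α < 0 then π*₂(s) < π*(s). -/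
/-!
The first term of `π*₂` is exactly `π*`, so
`π*₂ - π* = K · (1 - exp (-(2 α r (T - s))))` with `K > 0`.
Since `x ↦ 1 - exp (-x)` is increasing and vanishes at `0`, the gap has the sign of
`α · 2 r (T - s)`, which is the sign of `α`.
-/

theorem Real.sign_one_sub_exp_neg (x : ℝ) :
    SignType.sign (1 - Real.exp (-x)) = SignType.sign x := by
  rcases lt_trichotomy x 0 with hx | rfl | hx
  · rw [_root_.sign_neg hx, _root_.sign_neg (sub_neg.2 (Real.one_lt_exp_iff.2 (neg_pos.2 hx)))]
  · simp
  · rw [sign_pos hx, sign_pos (sub_pos.2 (Real.exp_lt_one_iff.2 (neg_neg_of_pos hx)))]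

section SignMul

variable {α : Type*} [Ring α] [LinearOrder α] [IsStrictOrderedRing α]

theorem sign_mul_of_pos_left {K : α} (hK : 0 < K) (y : α) :
    SignType.sign (K * y) = SignType.sign y := by
  rw [sign_mul, sign_pos hK, one_mul]

theorem sign_mul_of_pos_right {c : α} (hc : 0 < c) (x : α) :
    SignType.sign (x * c) = SignType.sign x := by
  rw [sign_mul, sign_pos hc, mul_one]

end SignMul

theorem cev_strategy_gap_eq (r b σ α μ S τ : ℝ) :
    (b - r) / (2*μ*σ^2*S^(2*α))
        - (1/(2*μ)) * ((b - r)/(σ * S^α))^2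
            * ((Real.exp (-(2*α*r*τ)) - 1) / r) * Real.exp (-(r*τ))
      - (b - r) / (2*μ*σ^2*S^(2*α))
      = (1/(2*μ)) * ((b - r)/(σ * S^α))^2 * Real.exp (-(r*τ)) / r
          * (1 - Real.exp (-(α * (2*r*τ)))) := by
  ring_nf

/-- CEV model comparison: comparing the game-theoretic strategy `π*₂(s)`
with the dynamic optimal strategy `π*(s) = (b−r)/(2μσ²S^{2α})`: they coincide if
`α = 0`, `π*₂ > π*` if `α > 0`, and `π*₂ < π*` if `α < 0`. -/
theorem cev_strategy_comparison
    (r b σ α μ S T s : ℝ)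
    (hbr : b > r) (hr : r > 0) (hσ : σ > 0) (hμ : μ > 0) (hS : S > 1) (hsT : s < T)
    (π2 πstar : ℝ)
    (hπ2 : π2 = (b - r) / (2*μ*σ^2*S^(2*α))
        - (1/(2*μ)) * ((b - r)/(σ * S^α))^2
            * ((Real.exp (-(2*α*r*(T - s))) - 1) / r) * Real.exp (-(r*(T - s))))
    (hπstar : πstar = (b - r) / (2*μ*σ^2*S^(2*α))) :
    (α = 0 → π2 = πstar) ∧ (α > 0 → π2 > πstar) ∧ (α < 0 → π2 < πstar) := by
  have hSα : 0 < S ^ α := Real.rpow_pos_of_pos (zero_lt_one.trans hS) α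
  have hK : 0 < (1/(2*μ)) * ((b - r)/(σ * S^α))^2 * Real.exp (-(r*(T - s))) / r := by
    have : 0 < (b - r) / (σ * S ^ α) := div_pos (sub_pos.2 hbr) (mul_pos hσ hSα)
    positivity
  have hgap : SignType.sign (π2 - πstar) = SignType.sign α := by
    rw [hπ2, hπstar, cev_strategy_gap_eq r b σ α μ S (T - s), sign_mul_of_pos_left hK,
      Real.sign_one_sub_exp_neg,
      sign_mul_of_pos_right (mul_pos (mul_pos two_pos hr) (sub_pos.2 hsT))]
  refine ⟨fun hα => ?_, fun hα => ?_, fun hα => ?_⟩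
  · rw [hα, sign_zero, sign_eq_zero_iff] at hgap
    exact sub_eq_zero.1 hgap
  · rw [sign_pos hα, sign_eq_one_iff] at hgap
    exact sub_pos.1 hgap
  · rw [sign_neg hα, sign_eq_neg_one_iff] at hgap
    exact sub_neg.1 hgap
end
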